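/- Consider the two-level clock with H_C = (ω/2)·σ_x on ℂ², eigenstates |±⟩ with eigenvalues ±ω/2, and clock states |φ⟩ = e^{i g₊} e^{-i ωφ/2}|+⟩ + e^{i g₋} e^{i ωφ/2}|−⟩ for φ ∈ [0, 2π/ω). Then the first-moment operator φ_C = (ω/2π)·∫₀^{2π/ω} φ |φ⟩⟨φ| dφ equals (π/ω)·I + (i/ω)·(e^{i(g₊−g₋)}|+⟩⟨−| − e^{−i(g₊−g₋)}|−⟩⟨+|), and its commutator with H_C is [φ_C, H_C] = i·(I − |φ=0⟩⟨φ=0|). -/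

import Mathlib

open Real

/-- The rank-one operator `|u⟩⟨w|`. -/
noncomputable def outerProd {d : ℕ} (u w : EuclideanSpace ℂ (Fin d)) :
    EuclideanSpace ℂ (Fin d) →L[ℂ] EuclideanSpace ℂ (Fin d) :=
  (innerSL ℂ w).smulRight u

lemma outerProd_apply {d : ℕ} (u w x : EuclideanSpace ℂ (Fin d)) :
    outerProd u w x = (inner ℂ w x : ℂ) • u := rfl

lemma outerProd_smul_left {d : ℕ} (c : ℂ) (u w : EuclideanSpace ℂ (Fin d)) :
    outerProd (c • u) w = c • outerProd u w := by
  ext x; simp [outerProd_apply, smul_smul, mul_comm]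

lemma outerProd_smul_right {d : ℕ} (c : ℂ) (u w : EuclideanSpace ℂ (Fin d)) :
    outerProd u (c • w) = (starRingEnd ℂ c) • outerProd u w := by
  ext x; simp [outerProd_apply, inner_smul_left, smul_smul]; exact Or.inl (mul_comm _ _)

lemma outerProd_add_left {d : ℕ} (u v w : EuclideanSpace ℂ (Fin d)) :
    outerProd (u + v) w = outerProd u w + outerProd v w := by
  ext x; simp [outerProd_apply, smul_add]

lemma outerProd_add_right {d : ℕ} (u v w : EuclideanSpace ℂ (Fin d)) :
    outerProd u (v + w) = outerProd u v + outerProd u w := by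
  ext x; simp [outerProd_apply, inner_add_left, add_smul]

lemma sum_outerProd_basis (b : OrthonormalBasis (Fin 2) ℂ (EuclideanSpace ℂ (Fin 2))) :
    outerProd (b 0) (b 0) + outerProd (b 1) (b 1) = 1 := by
  refine ContinuousLinearMap.ext fun x => ?_
  have := b.sum_repr' x
  simp only [Fin.sum_univ_two] at this
  simpa [outerProd_apply] using this

lemma int_phi_exp (a : ℂ) (ha : a ≠ 0) (T : ℝ) :
    ∫ φ in (0:ℝ)..T, (φ:ℂ) * Complex.exp (a*φ)
      = Complex.exp (a*T) * (T/a - 1/a^2) + 1/a^2 := by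
  have hder : ∀ z : ℂ, HasDerivAt (fun z : ℂ => Complex.exp (a*z) * (z/a - 1/a^2))
      ((z:ℂ) * Complex.exp (a*z)) z := by
    intro z
    have h1 : HasDerivAt (fun z : ℂ => Complex.exp (a*z)) (Complex.exp (a*z) * a) z := by
      have := (Complex.hasDerivAt_exp (a*z)).comp z ((hasDerivAt_id z).const_mul a)
      exact this.congr_deriv (by ring)
    have h2 : HasDerivAt (fun z : ℂ => z/a - 1/a^2) (1/a) z := by
      have := ((hasDerivAt_id z).div_const a).sub_const (1/a^2)
      exact this
    have := h1.mul h2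
    exact this.congr_deriv (by field_simp; ring)
  have hcont : Continuous fun φ : ℝ => (φ:ℂ) * Complex.exp (a*φ) := by fun_prop
  rw [intervalIntegral.integral_eq_sub_of_hasDerivAt
    (fun φ _ => (hder φ).comp_ofReal) (hcont.intervalIntegrable _ _)]
  simp only [Complex.ofReal_zero, mul_zero, Complex.exp_zero]
  push_cast
  ring

lemma int_phi (T : ℝ) : ∫ φ in (0:ℝ)..T, (φ:ℂ) = ((T:ℂ)^2/2) := by
  have : ∫ φ in (0:ℝ)..T, (φ:ℂ) = ((∫ φ in (0:ℝ)..T, φ : ℝ) : ℂ) :=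
    intervalIntegral.integral_ofReal
  rw [this, integral_id]
  push_cast; ring

/-- Clock states of the two-level clock:
`|φ⟩ = e^{i g₊} e^{-i ωφ/2}|+⟩ + e^{i g₋} e^{i ωφ/2}|−⟩`. -/
noncomputable def qubitClock (plus minus : EuclideanSpace ℂ (Fin 2)) (ω gp gm : ℝ) (φ : ℝ) :
    EuclideanSpace ℂ (Fin 2) :=
  (Complex.exp (Complex.I * (gp : ℂ)) * Complex.exp (-Complex.I * ((ω : ℂ) / 2) * (φ : ℂ))) • plus
    + (Complex.exp (Complex.I * (gm : ℂ)) * Complex.exp (Complex.I * ((ω : ℂ) / 2) * (φ : ℂ))) • minus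

section main
variable (ω gp gm : ℝ) (b : OrthonormalBasis (Fin 2) ℂ (EuclideanSpace ℂ (Fin 2)))

lemma hconj_exp (r : ℝ) : (starRingEnd ℂ) (Complex.exp (Complex.I * r)) = Complex.exp (-(Complex.I * r)) := by
  rw [← Complex.exp_conj]; simp [Complex.conj_I]

lemma mul_exp_one (x A : ℂ) (h : A = 0) : x * Complex.exp A = x := by
  rw [h, Complex.exp_zero, mul_one]

lemma mul_exp_eq (x A B : ℂ) (h : A = B) : x * Complex.exp A = x * Complex.exp B := by rw [h]

lemma hpt (φ : ℝ) : (φ : ℂ) • outerProd (qubitClock (b 0) (b 1) ω gp gm φ)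
      (qubitClock (b 0) (b 1) ω gp gm φ) =
    (φ:ℂ) • (1 : EuclideanSpace ℂ (Fin 2) →L[ℂ] EuclideanSpace ℂ (Fin 2))
    + ((φ:ℂ) * Complex.exp (-Complex.I*(ω:ℂ)*(φ:ℂ))) •
        (Complex.exp (Complex.I * ((gp:ℂ) - (gm:ℂ))) • outerProd (b 0) (b 1))
    + ((φ:ℂ) * Complex.exp (Complex.I*(ω:ℂ)*(φ:ℂ))) •
        (Complex.exp (-Complex.I * ((gp:ℂ) - (gm:ℂ))) • outerProd (b 1) (b 0)) := by
  rw [← sum_outerProd_basis b]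
  simp only [qubitClock, outerProd_add_left, outerProd_add_right, outerProd_smul_left,
    outerProd_smul_right, map_mul, hconj_exp]
  have hc : ∀ r : ℝ, (starRingEnd ℂ) (Complex.exp (-Complex.I * ((ω:ℂ)/2) * r))
      = Complex.exp (Complex.I * ((ω:ℂ)/2) * r) := by
    intro r; rw [← Complex.exp_conj]; congr 1
    simp [Complex.conj_I, map_ofNat]; try ring
  have hc2 : ∀ r : ℝ, (starRingEnd ℂ) (Complex.exp (Complex.I * ((ω:ℂ)/2) * r))
      = Complex.exp (-Complex.I * ((ω:ℂ)/2) * r) := by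
    intro r; rw [← Complex.exp_conj]; congr 1
    simp [Complex.conj_I, map_ofNat]; try ring
  rw [hc, hc2]
  match_scalars <;>
    (ring_nf;
     simp only [pow_two, mul_assoc, ← Complex.exp_add];
     first
      | exact mul_exp_one _ _ (by ring)
      | exact mul_exp_eq _ _ _ (by ring))

lemma moment_eq (hω : 0 < ω) :
    ((ω : ℂ) / (2 * (π : ℂ))) •
        (∫ φ in (0:ℝ)..(2 * π / ω), (φ : ℂ) • outerProd (qubitClock (b 0) (b 1) ω gp gm φ)
          (qubitClock (b 0) (b 1) ω gp gm φ)) =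
      (((π : ℝ) / ω : ℝ) : ℂ) • (1 : EuclideanSpace ℂ (Fin 2) →L[ℂ] EuclideanSpace ℂ (Fin 2)) +
        (Complex.I / (ω : ℂ)) •
          (Complex.exp (Complex.I * ((gp : ℂ) - (gm : ℂ))) • outerProd (b 0) (b 1) -
            Complex.exp (-Complex.I * ((gp : ℂ) - (gm : ℂ))) • outerProd (b 1) (b 0)) := by
  have hω' : (ω:ℂ) ≠ 0 := Complex.ofReal_ne_zero.2 hω.ne'
  have hπ : (π:ℂ) ≠ 0 := Complex.ofReal_ne_zero.2 Real.pi_ne_zero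
  have ha1 : (-Complex.I*(ω:ℂ)) ≠ 0 := by
    simp [Complex.I_ne_zero, hω']
  have ha2 : (Complex.I*(ω:ℂ)) ≠ 0 := mul_ne_zero Complex.I_ne_zero hω'
  have hTc : ((2*π/ω : ℝ) : ℂ) = 2*(π:ℂ)/ω := by push_cast; ring
  have hexp1 : Complex.exp (-Complex.I*(ω:ℂ)*((2*π/ω : ℝ):ℂ)) = 1 := by
    rw [hTc, show -Complex.I*(ω:ℂ)*(2*(π:ℂ)/ω) = -(2*(π:ℂ)*Complex.I) by field_simp,
      Complex.exp_neg, Complex.exp_two_pi_mul_I, inv_one]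
  have hexp2 : Complex.exp (Complex.I*(ω:ℂ)*((2*π/ω : ℝ):ℂ)) = 1 := by
    rw [hTc, show Complex.I*(ω:ℂ)*(2*(π:ℂ)/ω) = 2*(π:ℂ)*Complex.I by field_simp,
      Complex.exp_two_pi_mul_I]
  have h6 : (Complex.I)^6 = -1 := by
    rw [(by norm_num : (6:ℕ) = 2*3), pow_mul, Complex.I_sq]; norm_num
  have h4 : (Complex.I)^4 = 1 := by
    rw [(by norm_num : (4:ℕ) = 2*2), pow_mul, Complex.I_sq]; norm_num
  have e1 : ∫ φ in (0:ℝ)..(2*π/ω), (φ:ℂ) * Complex.exp (-Complex.I*(ω:ℂ)*(φ:ℂ))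
      = 2*(π:ℂ)*Complex.I/ω^2 := by
    rw [int_phi_exp _ ha1, hexp1, hTc]
    field_simp
    ring_nf
    linear_combination (-2*(π:ℂ)*Complex.I) * Complex.I_sq
  have e2 : ∫ φ in (0:ℝ)..(2*π/ω), (φ:ℂ) * Complex.exp (Complex.I*(ω:ℂ)*(φ:ℂ))
      = -(2*(π:ℂ)*Complex.I/ω^2) := by
    rw [int_phi_exp _ ha2, hexp2, hTc]
    field_simp
    ring_nf
    linear_combination (2*(π:ℂ)*Complex.I) * Complex.I_sq
  have hi1 : IntervalIntegrable (fun φ:ℝ => (φ:ℂ) •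
      (1 : EuclideanSpace ℂ (Fin 2) →L[ℂ] EuclideanSpace ℂ (Fin 2))) MeasureTheory.volume 0 (2*π/ω) := by
    apply Continuous.intervalIntegrable; fun_prop
  have hi2 : IntervalIntegrable (fun φ:ℝ => ((φ:ℂ) * Complex.exp (-Complex.I*(ω:ℂ)*(φ:ℂ))) •
      (Complex.exp (Complex.I * ((gp:ℂ) - (gm:ℂ))) • outerProd (b 0) (b 1))) MeasureTheory.volume 0 (2*π/ω) := by
    apply Continuous.intervalIntegrable; fun_prop
  have hi3 : IntervalIntegrable (fun φ:ℝ => ((φ:ℂ) * Complex.exp (Complex.I*(ω:ℂ)*(φ:ℂ))) •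
      (Complex.exp (-Complex.I * ((gp:ℂ) - (gm:ℂ))) • outerProd (b 1) (b 0))) MeasureTheory.volume 0 (2*π/ω) := by
    apply Continuous.intervalIntegrable; fun_prop
  rw [intervalIntegral.integral_congr (g := fun φ:ℝ =>
      (φ:ℂ) • (1 : EuclideanSpace ℂ (Fin 2) →L[ℂ] EuclideanSpace ℂ (Fin 2))
      + ((φ:ℂ) * Complex.exp (-Complex.I*(ω:ℂ)*(φ:ℂ))) •
          (Complex.exp (Complex.I * ((gp:ℂ) - (gm:ℂ))) • outerProd (b 0) (b 1))
      + ((φ:ℂ) * Complex.exp (Complex.I*(ω:ℂ)*(φ:ℂ))) •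
          (Complex.exp (-Complex.I * ((gp:ℂ) - (gm:ℂ))) • outerProd (b 1) (b 0)))
      (fun φ _ => hpt ω gp gm b φ),
    intervalIntegral.integral_add (hi1.add hi2) hi3,
    intervalIntegral.integral_add hi1 hi2,
    intervalIntegral.integral_smul_const, intervalIntegral.integral_smul_const,
    intervalIntegral.integral_smul_const, int_phi, e1, e2]
  match_scalars
  · field_simp
  · field_simp
  · field_simp

lemma comm_eq (hω : 0 < ω) (H : EuclideanSpace ℂ (Fin 2) →L[ℂ] EuclideanSpace ℂ (Fin 2))
    (hH : IsSelfAdjoint H)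
    (heigp : H (b 0) = ((ω / 2 : ℝ) : ℂ) • b 0)
    (heigm : H (b 1) = ((-(ω / 2) : ℝ) : ℂ) • b 1) :
    ((((π : ℝ) / ω : ℝ) : ℂ) • (1 : EuclideanSpace ℂ (Fin 2) →L[ℂ] EuclideanSpace ℂ (Fin 2)) +
        (Complex.I / (ω : ℂ)) •
          (Complex.exp (Complex.I * ((gp : ℂ) - (gm : ℂ))) • outerProd (b 0) (b 1) -
            Complex.exp (-Complex.I * ((gp : ℂ) - (gm : ℂ))) • outerProd (b 1) (b 0))) * H -
      H * ((((π : ℝ) / ω : ℝ) : ℂ) • (1 : EuclideanSpace ℂ (Fin 2) →L[ℂ] EuclideanSpace ℂ (Fin 2)) +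
        (Complex.I / (ω : ℂ)) •
          (Complex.exp (Complex.I * ((gp : ℂ) - (gm : ℂ))) • outerProd (b 0) (b 1) -
            Complex.exp (-Complex.I * ((gp : ℂ) - (gm : ℂ))) • outerProd (b 1) (b 0))) =
      Complex.I • ((1 : EuclideanSpace ℂ (Fin 2) →L[ℂ] EuclideanSpace ℂ (Fin 2)) -
        outerProd (qubitClock (b 0) (b 1) ω gp gm 0) (qubitClock (b 0) (b 1) ω gp gm 0)) := by
  have hω' : (ω:ℂ) ≠ 0 := Complex.ofReal_ne_zero.2 hω.ne'
  have hsym := hH.isSymmetric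
  have hHP01 : H * outerProd (b 0) (b 1) = ((ω:ℂ)/2) • outerProd (b 0) (b 1) := by
    refine ContinuousLinearMap.ext fun x => ?_
    simp [ContinuousLinearMap.mul_apply, outerProd_apply, heigp, smul_smul, mul_comm]
  have hHP10 : H * outerProd (b 1) (b 0) = (-((ω:ℂ)/2)) • outerProd (b 1) (b 0) := by
    refine ContinuousLinearMap.ext fun x => ?_
    simp [ContinuousLinearMap.mul_apply, outerProd_apply, heigm, smul_smul, mul_comm]
  have hP01H : outerProd (b 0) (b 1) * H = (-((ω:ℂ)/2)) • outerProd (b 0) (b 1) := by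
    refine ContinuousLinearMap.ext fun x => ?_
    have h := (hsym (b 1) x).symm
    simp only [ContinuousLinearMap.mul_apply, outerProd_apply, ContinuousLinearMap.smul_apply,
      ContinuousLinearMap.coe_coe] at h ⊢
    rw [h, heigm, inner_smul_left, smul_smul]
    congr 1
    rw [Complex.conj_ofReal]
    push_cast
    ring
  have hP10H : outerProd (b 1) (b 0) * H = ((ω:ℂ)/2) • outerProd (b 1) (b 0) := by
    refine ContinuousLinearMap.ext fun x => ?_
    have h := (hsym (b 0) x).symm
    simp only [ContinuousLinearMap.mul_apply, outerProd_apply, ContinuousLinearMap.smul_apply,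
      ContinuousLinearMap.coe_coe] at h ⊢
    rw [h, heigp, inner_smul_left, smul_smul]
    congr 1
    rw [Complex.conj_ofReal]
    push_cast
    ring
  have hq0 : qubitClock (b 0) (b 1) ω gp gm 0 =
      Complex.exp (Complex.I * (gp:ℂ)) • b 0 + Complex.exp (Complex.I * (gm:ℂ)) • b 1 := by
    simp [qubitClock]
  rw [hq0]
  simp only [outerProd_add_left, outerProd_add_right, outerProd_smul_left, outerProd_smul_right,
    hconj_exp, add_mul, mul_add, smul_mul_assoc, mul_smul_comm, sub_mul, mul_sub, one_mul, mul_one,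
    smul_sub, hHP01, hHP10, hP01H, hP10H]
  rw [← sum_outerProd_basis b]
  have hE1 : Complex.exp (Complex.I*(gp:ℂ) - Complex.I*(gm:ℂ))
      = Complex.exp (-(Complex.I*(gm:ℂ))) * Complex.exp (Complex.I*(gp:ℂ)) := by
    rw [← Complex.exp_add]; ring_nf
  have hE2 : Complex.exp (-(Complex.I*(gp:ℂ)) + Complex.I*(gm:ℂ))
      = Complex.exp (-(Complex.I*(gp:ℂ))) * Complex.exp (Complex.I*(gm:ℂ)) := by
    rw [← Complex.exp_add]
  have hE3 : ∀ r:ℝ, Complex.exp (-(Complex.I*(r:ℂ))) * Complex.exp (Complex.I*(r:ℂ)) = 1 := by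
    intro r; rw [← Complex.exp_add]; simp
  match_scalars <;>
    first
      | ring1
      | (rw [hE1]; field_simp; ring1)
      | (rw [hE2]; field_simp; ring1)
      | (rw [mul_assoc, hE3 gp]; ring1)
      | (rw [mul_assoc, hE3 gm]; ring1)
      | (field_simp; ring1)
      | (field_simp; ring_nf; simp only [mul_assoc, ← Complex.exp_add]; try ring_nf; try simp only [Complex.exp_zero]; try ring1)

end main

/-- Example 5 of the paper (two-level clock): for `H_C = (ω/2)·σ_x` on `ℂ²` with eigenstates
`|±⟩ = b 0, b 1` of eigenvalues `±ω/2`, the first-moment operator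
`φ_C = (ω/2π)·∫₀^{2π/ω} φ |φ⟩⟨φ| dφ` equals
`(π/ω)·I + (i/ω)·(e^{i(g₊−g₋)}|+⟩⟨−| − e^{−i(g₊−g₋)}|−⟩⟨+|)`, and
`[φ_C, H_C] = i·(I − |φ=0⟩⟨φ=0|)`. -/
theorem stmt_8 (ω gp gm : ℝ) (hω : 0 < ω)
    (b : OrthonormalBasis (Fin 2) ℂ (EuclideanSpace ℂ (Fin 2)))
    (H : EuclideanSpace ℂ (Fin 2) →L[ℂ] EuclideanSpace ℂ (Fin 2))
    (hH : IsSelfAdjoint H)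
    (heigp : H (b 0) = ((ω / 2 : ℝ) : ℂ) • b 0)
    (heigm : H (b 1) = ((-(ω / 2) : ℝ) : ℂ) • b 1) :
    ((ω : ℂ) / (2 * (π : ℂ))) •
        (∫ φ in (0:ℝ)..(2 * π / ω), (φ : ℂ) • outerProd (qubitClock (b 0) (b 1) ω gp gm φ)
          (qubitClock (b 0) (b 1) ω gp gm φ)) =
      (((π : ℝ) / ω : ℝ) : ℂ) • (1 : EuclideanSpace ℂ (Fin 2) →L[ℂ] EuclideanSpace ℂ (Fin 2)) +
        (Complex.I / (ω : ℂ)) •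
          (Complex.exp (Complex.I * ((gp : ℂ) - (gm : ℂ))) • outerProd (b 0) (b 1) -
            Complex.exp (-Complex.I * ((gp : ℂ) - (gm : ℂ))) • outerProd (b 1) (b 0)) ∧
    (((ω : ℂ) / (2 * (π : ℂ))) •
        (∫ φ in (0:ℝ)..(2 * π / ω), (φ : ℂ) • outerProd (qubitClock (b 0) (b 1) ω gp gm φ)
          (qubitClock (b 0) (b 1) ω gp gm φ))) * H -
      H * (((ω : ℂ) / (2 * (π : ℂ))) •
        (∫ φ in (0:ℝ)..(2 * π / ω), (φ : ℂ) • outerProd (qubitClock (b 0) (b 1) ω gp gm φ)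
          (qubitClock (b 0) (b 1) ω gp gm φ))) =
      Complex.I • ((1 : EuclideanSpace ℂ (Fin 2) →L[ℂ] EuclideanSpace ℂ (Fin 2)) -
        outerProd (qubitClock (b 0) (b 1) ω gp gm 0) (qubitClock (b 0) (b 1) ω gp gm 0)) := by
  refine ⟨moment_eq ω gp gm b hω, ?_⟩
  rw [moment_eq ω gp gm b hω]
  exact comm_eq ω gp gm b hω H hH heigp heigm
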